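/- Let M be a connected topological space equipped with a Borel measure μ, let H be a complex Hilbert space, and let A be a von Neumann algebra acting on H. Suppose q : M → A is an injective map which is continuous into B(H) with the weak operator topology, such that each q(x) is a minimal projection of A, and such that q is weakly overcomplete: for all v, w ∈ H the function x ↦ ⟨v, q(x)w⟩ is μ-integrable and ∫_M ⟨v, q(x)w⟩ dμ(x) = ⟨v, w⟩. Then the center of A is trivial: every a ∈ A satisfying a·b = b·a for all b ∈ A is a scalar multiple of the identity operator. -/
import Mathlib


open MeasureTheory
open scoped InnerProductSpace

/-- Let `M` be a connected topological space with a Borel measure `μ`,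
`H` a complex Hilbert space, and `A` a von Neumann algebra acting on `H`.  If
`q : M → A` is an injective, WOT-continuous map whose values are minimal projections
of `A`, and `q` is weakly overcomplete (`∫ ⟪v, q x w⟫ dμ = ⟪v, w⟫` for all `v w`),
then the center of `A` is trivial: any `a ∈ A` commuting with all of `A` is a scalar
multiple of the identity. -/
theorem center_trivial_of_coherent_state_quantization
    {M : Type*} [TopologicalSpace M] [ConnectedSpace M]
    [MeasurableSpace M] [BorelSpace M] (μ : Measure M)
    {H : Type*} [NormedAddCommGroup H] [InnerProductSpace ℂ H] [CompleteSpace H]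
    (A : VonNeumannAlgebra H) (q : M → (H →L[ℂ] H))
    (hq_mem : ∀ x, q x ∈ A)
    (hq_inj : Function.Injective q)
    (hq_cont : ∀ v w : H, Continuous fun x => ⟪v, q x w⟫_ℂ)
    (hq_ne : ∀ x, q x ≠ 0)
    (hq_idem : ∀ x, q x * q x = q x)
    (hq_sa : ∀ x, ContinuousLinearMap.adjoint (q x) = q x)
    (hq_min : ∀ x, ∀ a ∈ A, ∃ c : ℂ, q x * a * q x = c • q x)
    (hq_int : ∀ v w : H, Integrable (fun x => ⟪v, q x w⟫_ℂ) μ)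
    (hq_over : ∀ v w : H, ∫ x, ⟪v, q x w⟫_ℂ ∂μ = ⟪v, w⟫_ℂ) :
    ∀ a ∈ A, (∀ b ∈ A, a * b = b * a) → ∃ c : ℂ, a = c • (1 : H →L[ℂ] H) := by
  intro a ha hcomm
  -- eigenvalue function
  choose c hc using fun x => hq_min x a ha
  have haq : ∀ x, a * q x = c x • q x := by
    intro x
    calc a * q x = a * (q x * q x) := by rw [hq_idem]
      _ = (a * q x) * q x := by rw [mul_assoc]
      _ = (q x * a) * q x := by rw [hcomm (q x) (hq_mem x)]
      _ = c x • q x := hc x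
  -- if q y * q x ≠ 0 then c y = c x
  have key : ∀ x y, q y * q x ≠ 0 → c y = c x := by
    intro x y hne
    have h1 : q y * (a * q x) = c x • (q y * q x) := by rw [haq x, mul_smul_comm]
    have h2 : q y * (a * q x) = c y • (q y * q x) := by
      rw [← mul_assoc, ← hcomm (q y) (hq_mem y), haq y, smul_mul_assoc]
    have h3 : (c y - c x) • (q y * q x) = 0 := by
      rw [sub_smul, h2.symm.trans h1, sub_self]
    rcases smul_eq_zero.mp h3 with h | h
    · exact sub_eq_zero.mp h
    · exact absurd h hne
  -- local constancy of c
  have loc : ∀ x, ∃ V : Set M, IsOpen V ∧ x ∈ V ∧ ∀ y ∈ V, c y = c x := by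
    intro x
    obtain ⟨w, hw⟩ : ∃ w, q x w ≠ 0 := by
      by_contra h
      push_neg at h
      exact hq_ne x (ContinuousLinearMap.ext fun w => h w)
    set u := q x w with hu
    have hqxu : q x u = u := by
      have := congrArg (fun T => T w) (hq_idem x)
      simpa using this
    have hfx : ⟪u, q x u⟫_ℂ ≠ 0 := by
      rw [hqxu]
      exact fun h => hw ((inner_self_eq_zero (𝕜 := ℂ)).mp h)
    refine ⟨{y | ⟪u, q y u⟫_ℂ ≠ 0}, ?_, hfx, ?_⟩
    · exact isOpen_compl_iff.mpr ((isClosed_singleton (x := (0:ℂ))).preimage (hq_cont u u))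
    · intro y hy
      apply key
      intro h0
      have : (q y * q x) u = 0 := by rw [h0]; rfl
      have : q y u = 0 := by
        simpa [ContinuousLinearMap.mul_apply, hqxu] using this
      exact hy (by simp [this])
  -- c is constant by connectedness
  obtain ⟨x₀⟩ : Nonempty M := inferInstance
  have hconst : ∀ x, c x = c x₀ := by
    have hclopen : IsClopen {x | c x = c x₀} := by
      constructor
      · rw [← isOpen_compl_iff]
        refine isOpen_iff_mem_nhds.mpr fun y hy => ?_
        obtain ⟨V, hV, hyV, hVc⟩ := loc y
        exact Filter.mem_of_superset (hV.mem_nhds hyV) fun z hz hz' =>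
          hy ((hVc z hz).symm.trans hz')
      · refine isOpen_iff_mem_nhds.mpr fun y hy => ?_
        obtain ⟨V, hV, hyV, hVc⟩ := loc y
        exact Filter.mem_of_superset (hV.mem_nhds hyV) fun z hz => (hVc z hz).trans hy
    rcases isClopen_iff.mp hclopen with h | h
    · exact absurd (Set.eq_empty_iff_forall_notMem.mp h x₀) (by simp)
    · intro x
      have : x ∈ {x | c x = c x₀} := by rw [h]; trivial
      exact this
  -- conclude a = c x₀ • 1
  refine ⟨c x₀, ?_⟩
  ext w
  apply ext_inner_left ℂ
  intro v
  have step : ∀ x, ⟪v, a (q x w)⟫_ℂ = c x₀ * ⟪v, q x w⟫_ℂ := by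
    intro x
    have := congrArg (fun T => ⟪v, T w⟫_ℂ) (haq x)
    simpa [ContinuousLinearMap.mul_apply, inner_smul_right, hconst x] using this
  calc ⟪v, a w⟫_ℂ = ⟪ContinuousLinearMap.adjoint a v, w⟫_ℂ := by
        rw [ContinuousLinearMap.adjoint_inner_left]
    _ = ∫ x, ⟪ContinuousLinearMap.adjoint a v, q x w⟫_ℂ ∂μ := (hq_over _ w).symm
    _ = ∫ x, c x₀ * ⟪v, q x w⟫_ℂ ∂μ := by
        refine integral_congr_ae (Filter.Eventually.of_forall fun x => ?_)
        show ⟪ContinuousLinearMap.adjoint a v, (q x) w⟫_ℂ = c x₀ * ⟪v, (q x) w⟫_ℂ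
        rw [ContinuousLinearMap.adjoint_inner_left, step x]
    _ = c x₀ * ∫ x, ⟪v, q x w⟫_ℂ ∂μ := integral_const_mul _ _
    _ = c x₀ * ⟪v, w⟫_ℂ := by rw [hq_over]
    _ = ⟪v, (c x₀ • (1 : H →L[ℂ] H)) w⟫_ℂ := by
        simp [inner_smul_right]
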